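/- Let U be an even MPO tensor such that U/√d is a graded normal non-degenerate tensor and U generates a type I fMPU with antiperiodic boundary conditions (U^{(N)} is unitary for every N ≥ 1). Then r(U)·ℓ(U) ≥ d², where r(U) and ℓ(U) are the right and left ranks of U. -/

import Mathlib

open Matrix Kronecker
open scoped ComplexOrder

namespace FQCA

noncomputable section

/-- The sign `(-1)^x` associated with a parity `x ∈ ℤ₂`. -/
def sgn (x : ZMod 2) : ℂ := (-1 : ℂ) ^ x.val

/-- Entrywise complex conjugation of a matrix. -/
def mconj {m n : Type*} (A : Matrix m n ℂ) : Matrix m n ℂ := A.map (starRingEnd ℂ)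

/-- A diagonal matrix with diagonal entries `±1`. -/
def IsParityMatrix {ν : Type*} (Z : Matrix ν ν ℂ) : Prop :=
  Z.IsDiag ∧ ∀ α, Z α α = 1 ∨ Z α α = -1

/-- An even tensor: `Z * A i = (-1)^{|i|} A i * Z`. -/
def EvenTensor {ι ν : Type*} [Fintype ν] (p : ι → ZMod 2)
    (A : ι → Matrix ν ν ℂ) (Z : Matrix ν ν ℂ) : Prop :=
  ∀ i, Z * A i = sgn (p i) • (A i * Z)

/-- The transfer matrix `E_A = Σ_i A^i ⊗ conj (A^i)`. -/
def transfer {ι ν : Type*} [Fintype ι] (A : ι → Matrix ν ν ℂ) :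
    Matrix (ν × ν) (ν × ν) ℂ :=
  ∑ i, (A i) ⊗ₖ (mconj (A i))

/-- `P` is the orthogonal projector of a nonzero proper graded invariant subspace for `A`. -/
def GradedInvariantProj {ι ν : Type*} [Fintype ν] [DecidableEq ν]
    (A : ι → Matrix ν ν ℂ) (Z P : Matrix ν ν ℂ) : Prop :=
  P * P = P ∧ Pᴴ = P ∧ P ≠ 0 ∧ P ≠ 1 ∧ P * Z = Z * P ∧ ∀ i, A i * P = P * (A i * P)

/-- A graded irreducible tensor: no nonzero proper graded invariant subspace. -/
def GradedIrreducible {ι ν : Type*} [Fintype ν] [DecidableEq ν]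
    (A : ι → Matrix ν ν ℂ) (Z : Matrix ν ν ℂ) : Prop :=
  ¬ ∃ P, GradedInvariantProj A Z P

/-- A graded normal tensor, `mult = 1` (non-degenerate) or `2` (degenerate):
graded irreducible, `1` is an eigenvalue of the transfer matrix of algebraic multiplicity
`mult`, and all other eigenvalues have modulus `< 1`. -/
def GradedNormal {ι ν : Type*} [Fintype ι] [Fintype ν] [DecidableEq ν]
    (A : ι → Matrix ν ν ℂ) (Z : Matrix ν ν ℂ) (mult : ℕ) : Prop :=
  GradedIrreducible A Z ∧
  (Matrix.charpoly (transfer A)).rootMultiplicity 1 = mult ∧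
  ∀ μ ∈ spectrum ℂ (transfer A), μ ≠ 1 → ‖μ‖ < 1

/-- Graded Canonical Form: `A^i = ⊕ₖ μₖ Aₖ^i` with `Z` block diagonal in the same way and
every block a graded normal tensor. -/
def GCF {ι ν : Type*} [Fintype ι] [Fintype ν] [DecidableEq ν]
    (p : ι → ZMod 2) (A : ι → Matrix ν ν ℂ) (Z : Matrix ν ν ℂ) : Prop :=
  ∃ (g : ℕ) (Dk : Fin g → ℕ) (e : ν ≃ ((k : Fin g) × Fin (Dk k)))
    (μ : Fin g → ℂ)
    (Ak : (k : Fin g) → ι → Matrix (Fin (Dk k)) (Fin (Dk k)) ℂ)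
    (Zk : (k : Fin g) → Matrix (Fin (Dk k)) (Fin (Dk k)) ℂ),
    0 < g ∧
    (∀ i, Matrix.reindex e e (A i) = Matrix.blockDiagonal' (fun k => μ k • Ak k i)) ∧
    Matrix.reindex e e Z = Matrix.blockDiagonal' Zk ∧
    ∀ k, IsParityMatrix (Zk k) ∧ EvenTensor p (Ak k) (Zk k) ∧
      (GradedNormal (Ak k) (Zk k) 1 ∨ GradedNormal (Ak k) (Zk k) 2)

/-- The coefficient `tr(A^{n₁} ⋯ A^{n_N})` of the fMPS with antiperiodic boundary
conditions generated by the tensor `A`. -/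
def mpsCoeff {ι ν : Type*} [Fintype ν] [DecidableEq ν] {N : ℕ}
    (A : ι → Matrix ν ν ℂ) (n : Fin N → ι) : ℂ :=
  ((List.ofFn fun j => A (n j)).prod).trace

/-- The fermionic sign `σ(n,m) = Σ_{k<j} (|n_j|+|m_j|)·|m_k|` of an fMPO matrix element. -/
def mpoSign {ι : Type*} (p : ι → ZMod 2) {N : ℕ} (n m : Fin N → ι) : ZMod 2 :=
  ∑ jk ∈ Finset.univ.filter (fun jk : Fin N × Fin N => jk.2 < jk.1),
    (p (n jk.1) + p (m jk.1)) * p (m jk.2)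

/-- The fMPO with antiperiodic boundary conditions generated by the MPO tensor `U`. -/
def fMPO {ι : Type*} (p : ι → ZMod 2) {ν : Type*} [Fintype ν] [DecidableEq ν]
    (U : ι → ι → Matrix ν ν ℂ) (N : ℕ) :
    Matrix (Fin N → ι) (Fin N → ι) ℂ :=
  Matrix.of fun n m =>
    sgn (mpoSign p n m) * ((List.ofFn fun j => U (n j) (m j)).prod).trace

/-- The fMPO with periodic boundary conditions generated by the MPO tensor `U`
(parity operator `Z` inserted in the trace). -/
def fMPO_PBC {ι : Type*} (p : ι → ZMod 2) {ν : Type*} [Fintype ν] [DecidableEq ν]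
    (Z : Matrix ν ν ℂ) (U : ι → ι → Matrix ν ν ℂ) (N : ℕ) :
    Matrix (Fin N → ι) (Fin N → ι) ℂ :=
  Matrix.of fun n m =>
    sgn (mpoSign p n m) * (Z * (List.ofFn fun j => U (n j) (m j)).prod).trace

/-- The fermionic blocking sign `τ(n,m) = Σ_{j<l} |m_j|·(|n_l|+|m_l|)`. -/
def blockSign {ι : Type*} (p : ι → ZMod 2) {q : ℕ} (n m : Fin q → ι) : ZMod 2 :=
  ∑ jl ∈ Finset.univ.filter (fun jl : Fin q × Fin q => jl.1 < jl.2),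
    p (m jl.1) * (p (n jl.2) + p (m jl.2))

/-- The `q`-fold blocked MPO tensor, with the fermionic blocking signs. -/
def blocked {ι : Type*} (p : ι → ZMod 2) {ν : Type*} [Fintype ν] [DecidableEq ν]
    (U : ι → ι → Matrix ν ν ℂ) (q : ℕ) :
    (Fin q → ι) → (Fin q → ι) → Matrix ν ν ℂ :=
  fun n m => sgn (blockSign p n m) • ((List.ofFn fun j => U (n j) (m j)).prod)

/-- The right rank `r(U)`: rank of the matrix with entry
`(-1)^{|n||m|} (U^{n,m})_{α,β}` in row `(n,β)` and column `(m,α)`. -/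
def rightRank {ι ν : Type*} [Fintype ι] [Fintype ν]
    (p : ι → ZMod 2) (U : ι → ι → Matrix ν ν ℂ) : ℕ :=
  (Matrix.of fun (r c : ι × ν) => sgn (p r.1 * p c.1) * U r.1 c.1 c.2 r.2).rank

/-- The left rank `ℓ(U)`: rank of the matrix with entry `(U^{n,m})_{α,β}`
in row `(n,α)` and column `(m,β)`. -/
def leftRank {ι ν : Type*} [Fintype ι] [Fintype ν]
    (U : ι → ι → Matrix ν ν ℂ) : ℕ :=
  (Matrix.of fun (r c : ι × ν) => U r.1 c.1 r.2 c.2).rank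

/-- The Pauli matrix `σˣ`, indexed by `Bool`. -/
def pauliX : Matrix Bool Bool ℂ := Matrix.of fun a b => if a = b then 0 else 1

/-- The Pauli matrix `σᶻ`, indexed by `Bool`. -/
def pauliZ : Matrix Bool Bool ℂ := Matrix.diagonal (fun b => if b then -1 else 1)

/-- The single-site physical parity matrix `P = diag((-1)^{|i|})`. -/
def singleP {ι : Type*} [DecidableEq ι] (p : ι → ZMod 2) : Matrix ι ι ℂ :=
  Matrix.diagonal (fun i => sgn (p i))

/-- The parity of the doubled physical index `(n,m)` of an MPO tensor. -/
def doubledP {ι : Type*} (p : ι → ZMod 2) : ι × ι → ZMod 2 :=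
  fun nm => p nm.1 + p nm.2

/-- An MPO tensor regarded as a tensor in the doubled physical index. -/
def doubledT {ι ν : Type*} (U : ι → ι → Matrix ν ν ℂ) : ι × ι → Matrix ν ν ℂ :=
  fun nm => U nm.1 nm.2

/-- An MPO tensor rescaled by `c`, regarded as a tensor in the doubled physical index. -/
def mpoScaled {ι ν : Type*} (c : ℂ) (U : ι → ι → Matrix ν ν ℂ) : ι × ι → Matrix ν ν ℂ :=
  fun nm => c • U nm.1 nm.2

/-- The parity operator `σᶻ ⊗ I` on the bond space `Bool × Fin b`. -/
def ZBP (b : ℕ) : Matrix (Bool × Fin b) (Bool × Fin b) ℂ :=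
  pauliZ ⊗ₖ (1 : Matrix (Fin b) (Fin b) ℂ)

/-- Structure of a type II MPO tensor: `U^{n,m} = (σˣ)^{|n|+|m|} ⊗ N^{n,m}`. -/
def TypeIIStruct {d b : ℕ} (p : Fin d → ZMod 2)
    (U : Fin d → Fin d → Matrix (Bool × Fin b) (Bool × Fin b) ℂ) : Prop :=
  ∃ Nm : Fin d → Fin d → Matrix (Fin b) (Fin b) ℂ,
    ∀ n m', U n m' = (pauliX ^ (p n + p m').val) ⊗ₖ Nm n m'

/-- The parity matrix of the product grading on `q` sites. -/
def bigP {d : ℕ} (p : Fin d → ZMod 2) (q : ℕ) :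
    Matrix (Fin q → Fin d) (Fin q → Fin d) ℂ :=
  Matrix.diagonal (fun n => sgn (∑ i, p (n i)))

/-- The Jordan-Wigner embedding at site `j` of a local operator `O` homogeneous of
parity `o`: `P^{|O|} ⊗ ⋯ ⊗ P^{|O|} ⊗ O ⊗ I ⊗ ⋯ ⊗ I`. -/
def jordanWigner {d N : ℕ} (p : Fin d → ZMod 2) (o : ZMod 2)
    (O : Matrix (Fin d) (Fin d) ℂ) (j : Fin N) :
    Matrix (Fin N → Fin d) (Fin N → Fin d) ℂ :=
  Matrix.of fun n m =>
    (∏ l ∈ Finset.univ.filter (fun l : Fin N => l < j),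
      ((singleP p) ^ o.val) (n l) (m l)) *
    O (n j) (m j) *
    (∏ l ∈ Finset.univ.filter (fun l : Fin N => j < l),
      (if n l = m l then (1:ℂ) else 0))

/-
Only the two-site operator `U^{(2)}` matters. Evenness forces `tr(U^{n₁,m₁} U^{n₂,m₂}) = 0` unless
`|n₁| + |m₁| = |n₂| + |m₂|`, and in that case the fermionic sign `σ(n,m)` splits as
`(-1)^{|n₁||m₁|} (-1)^{|m₁|}`. Hence, up to the sign `(-1)^{|m₁|}` on its columns, `U^{(2)}` is
the contraction `Σ_{α,β} R_{(n₁,β),(m₁,α)} L_{(n₂,β),(m₂,α)}` of the matrices `R`, `L` defining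
`r(U)` and `ℓ(U)`. Factoring `R` and `L` through their ranks factors `U^{(2)}` through a space of
dimension `r(U) ℓ(U)`, while unitarity gives `U^{(2)}` full rank `d²`.
-/

theorem _root_.Matrix.exists_eq_mul_rank {m n R : Type*} [Fintype n] [Field R] (A : Matrix m n R) :
    ∃ (B : Matrix m (Fin A.rank) R) (C : Matrix (Fin A.rank) n R), A = B * C := by
  classical
  let b : Module.Basis (Fin A.rank) R (LinearMap.range A.mulVecLin) := Module.finBasis R _
  let col (k : n) : LinearMap.range A.mulVecLin := ⟨A.col k, Pi.single k 1, by ext; simp⟩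
  refine ⟨Matrix.of fun i a => (b a : m → R) i, Matrix.of fun a k => b.repr (col k) a, ?_⟩
  ext i k
  have hcol := congr_arg (fun v : LinearMap.range A.mulVecLin => (v : m → R) i) (b.sum_repr (col k))
  simp only [AddSubmonoidClass.coe_finsetSum, SetLike.val_smul, Finset.sum_apply, Pi.smul_apply,
    smul_eq_mul, mul_comm] at hcol
  exact hcol.symm

section Contraction

variable {R m n κ κ' μ μ' σ τ : Type*} [Field R] [Fintype σ] [Fintype τ]

def _root_.Matrix.contract (A : Matrix (κ × σ) (μ × τ) R) (B : Matrix (κ' × σ) (μ' × τ) R)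
    (f : m → κ) (f' : m → κ') (g : n → μ) (g' : n → μ') : Matrix m n R :=
  Matrix.of fun i j => ∑ s, ∑ t, A (f i, s) (g j, t) * B (f' i, s) (g' j, t)

theorem _root_.Matrix.contract_mul_mul {a b : Type*} [Fintype a] [Fintype b]
    (A₁ : Matrix (κ × σ) a R) (A₂ : Matrix a (μ × τ) R) (B₁ : Matrix (κ' × σ) b R)
    (B₂ : Matrix b (μ' × τ) R) (f : m → κ) (f' : m → κ') (g : n → μ) (g' : n → μ') :
    Matrix.contract (A₁ * A₂) (B₁ * B₂) f f' g g' =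
      (Matrix.of fun i (x : a × b) => ∑ s, A₁ (f i, s) x.1 * B₁ (f' i, s) x.2) *
        Matrix.of fun (x : a × b) j => ∑ t, A₂ x.1 (g j, t) * B₂ x.2 (g' j, t) := by
  ext i j
  simp only [Matrix.contract, Matrix.mul_apply, Matrix.of_apply, Fintype.sum_prod_type,
    Finset.sum_mul, Finset.mul_sum]
  -- pushing the sums over `b`, `τ`, `σ` innermost, in turn, brings both sides to one order
  simp_rw [Finset.sum_comm (s := (Finset.univ : Finset b)),
    Finset.sum_comm (s := (Finset.univ : Finset τ)),
    Finset.sum_comm (s := (Finset.univ : Finset σ)), mul_mul_mul_comm]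

theorem _root_.Matrix.rank_contract_le [Fintype n] [Fintype μ] [Fintype μ']
    (A : Matrix (κ × σ) (μ × τ) R) (B : Matrix (κ' × σ) (μ' × τ) R)
    (f : m → κ) (f' : m → κ') (g : n → μ) (g' : n → μ') :
    (Matrix.contract A B f f' g g').rank ≤ A.rank * B.rank := by
  obtain ⟨A₁, A₂, hA⟩ := A.exists_eq_mul_rank
  obtain ⟨B₁, B₂, hB⟩ := B.exists_eq_mul_rank
  conv_lhs => rw [hA, hB, Matrix.contract_mul_mul]
  exact (Matrix.rank_mul_le_left _ _).trans ((Matrix.rank_le_card_width _).trans (by simp))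

end Contraction

theorem _root_.Matrix.trace_eq_zero_of_mul_eq_neg_mul {R ν : Type*} [Fintype ν] [DecidableEq ν]
    [CommRing R] [NoZeroDivisors R] [CharZero R] {Z X : Matrix ν ν R} (hZ : Z * Z = 1)
    (hX : Z * X = -(X * Z)) : X.trace = 0 := by
  have h : X.trace = -X.trace :=
    calc X.trace = (Z * X * Z).trace := by
          rw [Matrix.trace_mul_comm, ← mul_assoc, hZ, one_mul]
      _ = -X.trace := by rw [hX, neg_mul, mul_assoc, hZ, mul_one, Matrix.trace_neg]
  exact self_eq_neg.mp h

theorem sgn_one : sgn 1 = -1 := by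
  simp [sgn, ZMod.val_one]

theorem sgn_add (a b : ZMod 2) : sgn (a + b) = sgn a * sgn b := by
  rw [sgn, ZMod.val_add, ← neg_one_pow_eq_pow_mod_two, pow_add, sgn, sgn]

theorem IsParityMatrix.mul_self {ν : Type*} [Fintype ν] [DecidableEq ν] {Z : Matrix ν ν ℂ}
    (hZ : IsParityMatrix Z) : Z * Z = 1 := by
  rw [← hZ.1.diagonal_diag, Matrix.diagonal_mul_diagonal, ← Matrix.diagonal_one]
  congr 1
  ext α
  rcases hZ.2 α with h | h <;> simp [h]

theorem EvenTensor.trace_mul_eq_zero {ι ν : Type*} [Fintype ν] [DecidableEq ν] {p : ι → ZMod 2}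
    {A : ι → Matrix ν ν ℂ} {Z : Matrix ν ν ℂ} (hA : EvenTensor p A Z) (hZ : Z * Z = 1)
    {i j : ι} (hij : p i + p j = 1) : (A i * A j).trace = 0 :=
  Matrix.trace_eq_zero_of_mul_eq_neg_mul hZ <| by
    rw [← mul_assoc, hA i, smul_mul_assoc, mul_assoc, hA j, mul_smul_comm, smul_smul, ← sgn_add,
      hij, sgn_one, neg_one_smul, mul_assoc]

theorem mpoSign_two {ι : Type*} (p : ι → ZMod 2) (n m : Fin 2 → ι) :
    mpoSign p n m = (p (n 1) + p (m 1)) * p (m 0) := by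
  have hpairs : (Finset.univ.filter fun jk : Fin 2 × Fin 2 => jk.2 < jk.1) = {(1, 0)} := by decide
  rw [mpoSign, hpairs, Finset.sum_singleton]

section RankMatrices

variable {ι ν : Type*}

def rightRankMatrix (p : ι → ZMod 2) (U : ι → ι → Matrix ν ν ℂ) : Matrix (ι × ν) (ι × ν) ℂ :=
  Matrix.of fun r c => sgn (p r.1 * p c.1) * U r.1 c.1 c.2 r.2

def leftRankMatrix (U : ι → ι → Matrix ν ν ℂ) : Matrix (ι × ν) (ι × ν) ℂ :=
  Matrix.of fun r c => U r.1 c.1 r.2 c.2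

theorem fMPO_two_eq [Fintype ι] [DecidableEq ι] [Fintype ν] [DecidableEq ν] {p : ι → ZMod 2}
    {Z : Matrix ν ν ℂ} {U : ι → ι → Matrix ν ν ℂ} (hZ : Z * Z = 1)
    (hU : EvenTensor (doubledP p) (doubledT U) Z) :
    fMPO p U 2 = (rightRankMatrix p U).contract (leftRankMatrix U) (· 0) (· 1) (· 0) (· 1) *
      Matrix.diagonal fun m => sgn (p (m 0)) := by
  ext n m
  have hcontract : (rightRankMatrix p U).contract (leftRankMatrix U) (· 0) (· 1) (· 0) (· 1) n m =
      sgn (p (n 0) * p (m 0)) * (U (n 0) (m 0) * U (n 1) (m 1)).trace := by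
    simp only [Matrix.contract, rightRankMatrix, leftRankMatrix, Matrix.of_apply,
      Matrix.trace, Matrix.diag_apply, Matrix.mul_apply, Finset.mul_sum, mul_assoc]
    exact Finset.sum_comm
  have hprod : (List.ofFn fun j : Fin 2 => U (n j) (m j)).prod = U (n 0) (m 0) * U (n 1) (m 1) := by
    simp [List.ofFn_succ]
  rw [Matrix.mul_diagonal, hcontract]
  simp only [fMPO, Matrix.of_apply, mpoSign_two, hprod]
  obtain hpar | hpar : p (n 1) + p (m 1) = p (n 0) + p (m 0) ∨
      (p (n 0) + p (m 0)) + (p (n 1) + p (m 1)) = 1 := by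
    generalize p (n 0) + p (m 0) = a; generalize p (n 1) + p (m 1) = b; revert a b; decide
  · have hsign : (p (n 0) + p (m 0)) * p (m 0) = p (n 0) * p (m 0) + p (m 0) := by
      generalize p (n 0) = a; generalize p (m 0) = b; revert a b; decide
    rw [hpar, hsign, sgn_add]
    ring
  · have hT : (U (n 0) (m 0) * U (n 1) (m 1)).trace = 0 :=
      hU.trace_mul_eq_zero (i := (n 0, m 0)) (j := (n 1, m 1)) hZ hpar
    rw [hT, mul_zero, mul_zero, zero_mul]

end RankMatrices

theorem rank_product_ge_general {d D : ℕ} (p : Fin d → ZMod 2)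
    (Z : Matrix (Fin D) (Fin D) ℂ) (hZ : IsParityMatrix Z)
    (U : Fin d → Fin d → Matrix (Fin D) (Fin D) ℂ)
    (hE : EvenTensor (doubledP p) (doubledT U) Z)
    (hunit : ∀ N : ℕ, 1 ≤ N → fMPO p U N ∈ Matrix.unitaryGroup (Fin N → Fin d) ℂ) :
    d ^ 2 ≤ rightRank p U * leftRank U := by
  have hU₂ : IsUnit (fMPO p U 2) := Unitary.isUnit_coe (U := ⟨_, hunit 2 one_le_two⟩)
  calc d ^ 2 = (fMPO p U 2).rank := by simp [Matrix.rank_of_isUnit _ hU₂]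
    _ ≤ rightRank p U * leftRank U := by
      rw [fMPO_two_eq hZ.mul_self hE]
      exact (Matrix.rank_mul_le_left _ _).trans (Matrix.rank_contract_le _ _ _ _ _ _)

/-- For a type I fMPU whose tensor `U/√d` is graded normal
non-degenerate, the product of the right and left ranks is at least `d²`. -/
theorem rank_product_ge {d D : ℕ} (hd : 1 ≤ d) (p : Fin d → ZMod 2)
    (Z : Matrix (Fin D) (Fin D) ℂ) (hZ : IsParityMatrix Z)
    (U : Fin d → Fin d → Matrix (Fin D) (Fin D) ℂ)
    (hE : EvenTensor (doubledP p) (doubledT U) Z)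
    (hnorm : GradedNormal (mpoScaled ((Real.sqrt d : ℂ))⁻¹ U) Z 1)
    (hunit : ∀ N : ℕ, 1 ≤ N → fMPO p U N ∈ Matrix.unitaryGroup (Fin N → Fin d) ℂ) :
    d ^ 2 ≤ rightRank p U * leftRank U :=
  rank_product_ge_general p Z hZ U hE hunit

end

end FQCA
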